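/- (Polylinear map is a geometric object.) Let A be a division ring and V a left A-vector space with bases e¹, e² related by e²_i = Σ_j g i j • e¹_j for an invertible matrix g. Fix m ≥ 1, a finite index set S, and coefficient families a_t : Fin n → (Fin m → Fin n) → S → A for t = 0, 1, …, m. Define the m-ary coordinate map w(v₁, …, v_m)^i = Σ_{J : Fin m → Fin n} Σ_{s ∈ S} a_0 i J s * v₁^{J 1} * a_1 i J s * v₂^{J 2} * ⋯ * v_m^{J m} * a_m i J s (an ordered product, since A is non-commutative). Then the image of the polylinear map does not depend on the choice of basis: for rows v_{k,1}, v_{k,2} ∈ A^n with v_{k,1} = v_{k,2} ⬝ g for each k = 1, …, m, one has Σ_l ( Σ_{i, J, s} a_0 i J s * (v_{1,2} ⬝ g)^{J 1} * a_1 i J s * ⋯ * (v_{m,2} ⬝ g)^{J m} * a_m i J s * (g⁻¹) i l ) • e²_l = Σ_i ( Σ_{J, s} a_0 i J s * v_{1,1}^{J 1} * a_1 i J s * ⋯ * v_{m,1}^{J m} * a_m i J s ) • e¹_i. -/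

import Mathlib

/-- The product of a row vector `v` over a matrix `g`: `(v ⬝ g) j = ∑ k, v k * g k j`. -/
def rowMul {A : Type*} [DivisionRing A] {n : ℕ}
    (v : Fin n → A) (g : Matrix (Fin n) (Fin n) A) : Fin n → A :=
  fun j => ∑ k, v k * g k j

/-- The ordered product `a_0 * v₁^{J 1} * a_1 * v₂^{J 2} * ⋯ * v_m^{J m} * a_m`
representing one term of a polylinear map in coordinates over a
non-commutative division ring. -/
def ordProd {A : Type*} [DivisionRing A] {n m : ℕ} {S : Type*}
    (a : Fin (m + 1) → Fin n → (Fin m → Fin n) → S → A)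
    (v : Fin m → Fin n → A) (i : Fin n) (J : Fin m → Fin n) (s : S) : A :=
  a 0 i J s * (List.ofFn fun k : Fin m => v k (J k) * a k.succ i J s).prod

/-- A polylinear map is a geometric object: its image does not depend on the
choice of basis.  If the bases `e¹, e²` are related by the invertible matrix
`g` and the coordinate rows of the arguments by `v_{k,1} = v_{k,2} ⬝ g`, then
the expansion of the transformed coordinates of the image over `e²` equals the
expansion of the original coordinates of the image over `e¹`. -/
theorem polylinear_map_is_geometric_object {A V : Type*} [DivisionRing A]
    [AddCommGroup V] [Module A V] {n m : ℕ} (hm : 1 ≤ m)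
    {S : Type*} [Fintype S]
    (e₁ e₂ : Module.Basis (Fin n) A V)
    (g g' : Matrix (Fin n) (Fin n) A)
    (hinv : g * g' = 1 ∧ g' * g = 1)
    (hbasis : ∀ i, e₂ i = ∑ j, g i j • e₁ j)
    (a : Fin (m + 1) → Fin n → (Fin m → Fin n) → S → A)
    (v₁ v₂ : Fin m → Fin n → A)
    (hv : ∀ k, v₁ k = rowMul (v₂ k) g) :
    ∑ l, (∑ i, ∑ J : Fin m → Fin n, ∑ s,
        ordProd a (fun k => rowMul (v₂ k) g) i J s * g' i l) • e₂ l
      = ∑ i, (∑ J : Fin m → Fin n, ∑ s, ordProd a v₁ i J s) • e₁ i := by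
  have hv' : v₁ = fun k => rowMul (v₂ k) g := funext hv
  subst hv'
  simp only [hbasis, Finset.smul_sum, smul_smul]
  rw [Finset.sum_comm]
  refine Finset.sum_congr rfl fun j _ => ?_
  rw [← Finset.sum_smul]
  congr 1
  simp_rw [← Finset.sum_mul]
  have h1 : ∀ i : Fin n, ∑ l, g' i l * g l j = (1 : Matrix (Fin n) (Fin n) A) i j := by
    intro i; rw [← hinv.2, Matrix.mul_apply]
  have key : ∀ w : Fin n → A, ∑ l, (∑ i, w i * g' i l) * g l j = w j := by
    intro w
    calc ∑ l, (∑ i, w i * g' i l) * g l j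
        = ∑ i, w i * ∑ l, g' i l * g l j := by
          simp_rw [Finset.sum_mul, mul_assoc]; rw [Finset.sum_comm]; simp_rw [← Finset.mul_sum]
      _ = w j := by simp [h1, Matrix.one_apply]
  exact key fun i => ∑ J : Fin m → Fin n, ∑ s, ordProd a (fun k => rowMul (v₂ k) g) i J s
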